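/- Chen's identity: let X : [a,b] → ℝ^d and Y : [b,c] → ℝ^d be continuously differentiable paths with X(b) = Y(b), and let X∗Y : [a,c] → ℝ^d be their concatenation. Then for every k ≥ 0, the level-k signature term of X∗Y equals ∑_{j=0}^{k} Sig_j(X) ⊗ Sig_{k−j}(Y), where Sig_j denotes the level-j signature term. -/

import Mathlib

/-! Induction on the word, from an arbitrary start point `t ≤ b`. For `i :: w`, split
`∫_t^c Z_i' · Sig_w(Z)` at `b`. On `[b, c]` the derivative of `Z` is that of `Y`, so this piece
is `Sig_{i :: w}(Y)` from `b`. On `[t, b]` it is that of `X`, and by induction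
`Sig_w(Z) = ∑_j Sig_{w.take j}(X) · Sig_{w.drop j}(Y)(b)`; the factors `Sig_{w.drop j}(Y)(b)` are
constants, so integrating against `X_i'` turns `Sig_{w.take j}(X)` into `Sig_{i :: w.take j}(X)`.
Shifting the summation index by one gives the identity for `i :: w`. -/

open MeasureTheory

/-- Coordinates of the signature of the path `X` over `[t, b]`, indexed by words:
`sigWordFrom X b [i₁,…,i_k] t = ∫_{t < t₁ < ⋯ < t_k < b} X_{i₁}'(t₁) ⋯ X_{i_k}'(t_k) dt₁⋯dt_k`. -/
noncomputable def sigWordFrom {d : ℕ} (X : ℝ → Fin d → ℝ) (b : ℝ) :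
    List (Fin d) → ℝ → ℝ
  | [] => fun _ => 1
  | i :: w => fun t => ∫ s in t..b, deriv (fun u => X u i) s * sigWordFrom X b w s

open Set

theorem intervalIntegral.integral_eq_add_of_eqOn_uIoo {E : Type*} [NormedAddCommGroup E]
    [NormedSpace ℝ E] {μ : Measure ℝ} [NullSingletonClass μ] {f g₁ g₂ : ℝ → E} {a b c : ℝ}
    (hg₁ : IntervalIntegrable g₁ μ a b) (hg₂ : IntervalIntegrable g₂ μ b c)
    (h₁ : EqOn f g₁ (uIoo a b)) (h₂ : EqOn f g₂ (uIoo b c)) :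
    ∫ x in a..c, f x ∂μ = (∫ x in a..b, g₁ x ∂μ) + ∫ x in b..c, g₂ x ∂μ := by
  rw [← integral_congr_uIoo h₁, ← integral_congr_uIoo h₂]
  exact (integral_add_adjacent_intervals (hg₁.congr_uIoo h₁.symm)
    (hg₂.congr_uIoo h₂.symm)).symm

section Signature

variable {d : ℕ} {X Y Z : ℝ → Fin d → ℝ} {b c : ℝ}

@[simp]
theorem sigWordFrom_nil (X : ℝ → Fin d → ℝ) (b t : ℝ) : sigWordFrom X b [] t = 1 := rfl

theorem sigWordFrom_cons (X : ℝ → Fin d → ℝ) (b : ℝ) (i : Fin d) (w : List (Fin d)) (t : ℝ) :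
    sigWordFrom X b (i :: w) t = ∫ s in t..b, deriv (fun u => X u i) s * sigWordFrom X b w s :=
  rfl

theorem ContDiff.continuous_deriv_apply (hX : ContDiff ℝ 1 X) (i : Fin d) :
    Continuous (deriv fun u => X u i) :=
  (contDiff_pi.mp hX i).continuous_deriv le_rfl

theorem continuous_sigWordFrom (hX : ContDiff ℝ 1 X) (b : ℝ) :
    ∀ w : List (Fin d), Continuous (sigWordFrom X b w)
  | [] => continuous_const
  | i :: w => by
    have hg := (hX.continuous_deriv_apply i).mul (continuous_sigWordFrom hX b w)
    have hsymm : sigWordFrom X b (i :: w) = fun t => -∫ s in b..t,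
        deriv (fun u => X u i) s * sigWordFrom X b w s :=
      funext fun t => intervalIntegral.integral_symm b t
    rw [hsymm]
    exact (intervalIntegral.continuous_primitive (fun _ _ => hg.intervalIntegrable _ _) b).neg

theorem integral_deriv_mul_sum_sigWordFrom (hX : ContDiff ℝ 1 X) (i : Fin d) {ι : Type*}
    (s : Finset ι) (v : ι → List (Fin d)) (κ : ι → ℝ) (t : ℝ) :
    ∫ u in t..b, deriv (fun u => X u i) u * ∑ j ∈ s, sigWordFrom X b (v j) u * κ j
      = ∑ j ∈ s, sigWordFrom X b (i :: v j) t * κ j := by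
  simp_rw [Finset.mul_sum, ← mul_assoc]
  rw [intervalIntegral.integral_finsetSum
    (f := fun j u => deriv (fun u => X u i) u * sigWordFrom X b (v j) u * κ j) fun j _ =>
    (((hX.continuous_deriv_apply i).mul (continuous_sigWordFrom hX b (v j))).mul
      continuous_const).intervalIntegrable t b]
  simp_rw [intervalIntegral.integral_mul_const, sigWordFrom_cons]

theorem sigWordFrom_eq_of_eqOn_deriv (hbc : b ≤ c)
    (h : ∀ i, EqOn (deriv fun u => Z u i) (deriv fun u => Y u i) (Ioi b)) :
    ∀ (w : List (Fin d)) {t : ℝ}, b ≤ t → sigWordFrom Z c w t = sigWordFrom Y c w t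
  | [], _, _ => rfl
  | i :: w, t, ht => intervalIntegral.integral_congr_uIoo fun x hx => by
    have hbx : b < x := (le_min ht hbc).trans_lt hx.1
    simp only [h i hbx, sigWordFrom_eq_of_eqOn_deriv hbc h w hbx.le]

theorem sigWordFrom_concat (hX : ContDiff ℝ 1 X) (hY : ContDiff ℝ 1 Y) (hbc : b ≤ c)
    (hZX : ∀ i, EqOn (deriv fun u => Z u i) (deriv fun u => X u i) (Iio b))
    (hZY : ∀ i, EqOn (deriv fun u => Z u i) (deriv fun u => Y u i) (Ioi b)) :
    ∀ (w : List (Fin d)) {t : ℝ}, t ≤ b → sigWordFrom Z c w t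
      = ∑ j ∈ Finset.range (w.length + 1),
          sigWordFrom X b (w.take j) t * sigWordFrom Y c (w.drop j) b
  | [], _, _ => by simp
  | i :: w, t, ht => by
    have hleft : EqOn (fun s => deriv (fun u => Z u i) s * sigWordFrom Z c w s)
        (fun s => deriv (fun u => X u i) s * ∑ j ∈ Finset.range (w.length + 1),
          sigWordFrom X b (w.take j) s * sigWordFrom Y c (w.drop j) b) (uIoo t b) :=
      fun x hx => by
        have hxb : x < b := hx.2.trans_le (max_le ht le_rfl)
        simp only [hZX i hxb, sigWordFrom_concat hX hY hbc hZX hZY w hxb.le]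
    have hright : EqOn (fun s => deriv (fun u => Z u i) s * sigWordFrom Z c w s)
        (fun s => deriv (fun u => Y u i) s * sigWordFrom Y c w s) (uIoo b c) :=
      fun x hx => by
        have hbx : b < x := (le_min le_rfl hbc).trans_lt hx.1
        simp only [hZY i hbx, sigWordFrom_eq_of_eqOn_deriv hbc hZY w hbx.le]
    have hcontX : Continuous fun s => deriv (fun u => X u i) s *
        ∑ j ∈ Finset.range (w.length + 1),
          sigWordFrom X b (w.take j) s * sigWordFrom Y c (w.drop j) b :=
      (hX.continuous_deriv_apply i).mul <| continuous_finsetSum _ fun j _ =>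
        (continuous_sigWordFrom hX b _).mul continuous_const
    have hcontY : Continuous fun s => deriv (fun u => Y u i) s * sigWordFrom Y c w s :=
      (hY.continuous_deriv_apply i).mul (continuous_sigWordFrom hY c w)
    rw [sigWordFrom_cons, intervalIntegral.integral_eq_add_of_eqOn_uIoo
      (hcontX.intervalIntegrable t b) (hcontY.intervalIntegrable b c) hleft hright,
      integral_deriv_mul_sum_sigWordFrom hX, ← sigWordFrom_cons, List.length_cons,
      Finset.sum_range_succ' _ (w.length + 1)]
    simp [add_comm]

end Signature

theorem chen_identity_general (d : ℕ) (a b c : ℝ) (hab : a ≤ b) (hbc : b ≤ c)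
    (X Y : ℝ → Fin d → ℝ) (hX : ContDiff ℝ 1 X) (hY : ContDiff ℝ 1 Y)
    (Z : ℝ → Fin d → ℝ) (hZ : ∀ t, Z t = if t ≤ b then X t else Y t)
    (w : List (Fin d)) :
    sigWordFrom Z c w a
      = ∑ j ∈ Finset.range (w.length + 1),
          sigWordFrom X b (w.take j) a * sigWordFrom Y c (w.drop j) b := by
  have hZX : ∀ i, EqOn (deriv fun u => Z u i) (deriv fun u => X u i) (Iio b) :=
    fun i s hs => Filter.EventuallyEq.deriv_eq <| by
      filter_upwards [Iio_mem_nhds hs] with u hu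
      simp [hZ u, le_of_lt (show u < b from hu)]
  have hZY : ∀ i, EqOn (deriv fun u => Z u i) (deriv fun u => Y u i) (Ioi b) :=
    fun i s hs => Filter.EventuallyEq.deriv_eq <| by
      filter_upwards [Ioi_mem_nhds hs] with u hu
      simp [hZ u, not_le.mpr (show b < u from hu)]
  exact sigWordFrom_concat hX hY hbc hZX hZY w hab

/-- Chen's identity: if `Z` is the concatenation of the `C¹` paths
`X : [a,b] → ℝ^d` and `Y : [b,c] → ℝ^d` with `X b = Y b`, then for every word `w`, the
corresponding coordinate of the level-`|w|` signature term of `Z` over `[a,c]` equals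
`∑_{j=0}^{|w|} Sig_{w.take j}(X) ⊗ Sig_{w.drop j}(Y)` — i.e. the coordinate of
`∑_{j=0}^{k} Sig_j(X) ⊗ Sig_{k-j}(Y)`. -/
theorem chen_identity (d : ℕ) (a b c : ℝ) (hab : a ≤ b) (hbc : b ≤ c)
    (X Y : ℝ → Fin d → ℝ) (hX : ContDiff ℝ 1 X) (hY : ContDiff ℝ 1 Y)
    (hmatch : X b = Y b)
    (Z : ℝ → Fin d → ℝ) (hZ : ∀ t, Z t = if t ≤ b then X t else Y t)
    (w : List (Fin d)) :
    sigWordFrom Z c w a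
      = ∑ j ∈ Finset.range (w.length + 1),
          sigWordFrom X b (w.take j) a * sigWordFrom Y c (w.drop j) b :=
  chen_identity_general d a b c hab hbc X Y hX hY Z hZ w
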